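/- arXiv:2204.04448 — 2 statements merged into one kernel-verified Lean document; each statement's English description precedes it below -/
import Mathlib

section
/- Let Q be a left quasigroup and N a normal subgroup of LMlt(Q). Define x σ_N y iff the stabilizers N_x and N_y coincide. Then each σ_N-class is a block for the action of LMlt(Q), and if Q is idempotent each σ_N-class is a subalgebra of Q. -/
/-! Basic theory of left quasigroups, following the paper. -/

structure LeftQuasigroup (Q : Type*) where
  op : Q → Q → Q
  ld : Q → Q → Q
  op_ld : ∀ x y, op x (ld x y) = y
  ld_op : ∀ x y, ld x (op x y) = y

/-- Orbit relation of a subgroup of permutations. -/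
def orbRel {Q : Type*} (N : Subgroup (Equiv.Perm Q)) (x y : Q) : Prop := ∃ h ∈ N, h y = x

/-- Orbit equivalence relation of a subgroup of permutations. -/
def orbSetoid {Q : Type*} (N : Subgroup (Equiv.Perm Q)) : Setoid Q where
  r := orbRel N
  iseqv := by
    constructor
    · exact fun x => ⟨1, N.one_mem, rfl⟩
    · rintro x y ⟨h, hN, rfl⟩
      exact ⟨h⁻¹, N.inv_mem hN, h.symm_apply_apply y⟩
    · rintro x y z ⟨h, hN, rfl⟩ ⟨g, gN, rfl⟩
      exact ⟨h * g, N.mul_mem hN gN, rfl⟩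

/-- The subgroup of permutations moving every point inside its `α`-class. -/
def kerRel {Q : Type*} (α : Setoid Q) : Subgroup (Equiv.Perm Q) where
  carrier := {g | ∀ x, α.r (g x) x}
  one_mem' := fun x => α.refl x
  mul_mem' := by
    intro a b ha hb x
    exact α.trans (ha (b x)) (hb x)
  inv_mem' := by
    intro a ha x
    have := ha (a⁻¹ x)
    rw [show a (a⁻¹ x) = x from a.apply_symm_apply x] at this
    exact α.symm this

/-- Pointwise stabilizer of `x` in `N`. -/
def pstab {Q : Type*} (N : Subgroup (Equiv.Perm Q)) (x : Q) : Subgroup (Equiv.Perm Q) :=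
  N ⊓ MulAction.stabilizer (Equiv.Perm Q) x

/-- Meet of a family of setoids. -/
def infSetoid {Q I : Type*} (α : I → Setoid Q) : Setoid Q where
  r x y := ∀ i, (α i).r x y
  iseqv := ⟨fun x i => (α i).refl x, fun h i => (α i).symm (h i),
    fun h g i => (α i).trans (h i) (g i)⟩

namespace LeftQuasigroup

variable {Q : Type*} (S : LeftQuasigroup Q)

/-- Left translation as a permutation. -/
def L (x : Q) : Equiv.Perm Q := ⟨S.op x, S.ld x, S.ld_op x, S.op_ld x⟩

/-- The left multiplication group. -/
def LMlt : Subgroup (Equiv.Perm Q) := Subgroup.closure (Set.range S.L)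

/-- The displacement group relative to a binary relation `r`. -/
def disRel (r : Q → Q → Prop) : Subgroup (Equiv.Perm Q) :=
  Subgroup.closure {g | ∃ h ∈ S.LMlt, ∃ x y, r x y ∧ g = h * (S.L x * (S.L y)⁻¹) * h⁻¹}

/-- The displacement group. -/
def Dis : Subgroup (Equiv.Perm Q) := S.disRel fun _ _ => True

/-- `Dis^α`. -/
def disUp (α : Setoid Q) : Subgroup (Equiv.Perm Q) := S.Dis ⊓ kerRel α

/-- `LMlt^α`, the kernel of `π_α`. -/
def lmltKer (α : Setoid Q) : Subgroup (Equiv.Perm Q) := S.LMlt ⊓ kerRel α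

/-- Congruences of a left quasigroup. -/
structure IsCongruence (α : Setoid Q) : Prop where
  op_compat : ∀ {x y z w : Q}, α.r x y → α.r z w → α.r (S.op x z) (S.op y w)
  ld_compat : ∀ {x y z w : Q}, α.r x y → α.r z w → α.r (S.ld x z) (S.ld y w)

theorem L_mem_lmlt (x : Q) : S.L x ∈ S.LMlt := Subgroup.subset_closure ⟨x, rfl⟩

theorem disRel_le_lmlt (r : Q → Q → Prop) : S.disRel r ≤ S.LMlt := by
  refine (Subgroup.closure_le _).2 ?_
  rintro g ⟨h, hh, x, y, _, rfl⟩
  exact mul_mem (mul_mem hh (mul_mem (S.L_mem_lmlt x) (inv_mem (S.L_mem_lmlt y)))) (inv_mem hh)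

theorem lmlt_maps {α : Setoid Q} (hα : S.IsCongruence α) {g : Equiv.Perm Q}
    (hg : g ∈ S.LMlt) : ∀ x y, α.r x y → α.r (g x) (g y) := by
  have H : ∀ g ∈ S.LMlt,
      (∀ x y, α.r x y → α.r (g x) (g y)) ∧ (∀ x y, α.r x y → α.r (g⁻¹ x) (g⁻¹ y)) := by
    intro g hg
    induction hg using Subgroup.closure_induction with
    | mem g hgen =>
      obtain ⟨z, rfl⟩ := hgen
      constructor
      · intro x y h; exact hα.op_compat (α.refl z) h
      · intro x y h; exact hα.ld_compat (α.refl z) h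
    | one =>
      constructor <;> intro x y h <;> simpa using h
    | mul a b _ _ ha hb =>
      constructor
      · intro x y h
        exact ha.1 _ _ (hb.1 _ _ h)
      · intro x y h
        have := hb.2 _ _ (ha.2 _ _ h)
        simpa [mul_inv_rev] using this
    | inv a _ ha =>
      refine ⟨ha.2, ?_⟩
      intro x y h
      simpa using ha.1 x y h
  exact (H g hg).1

/-- The blockwise stabilizer `Dis(Q)_{[x]_α}`. -/
def blockStab (α : Setoid Q) (hα : S.IsCongruence α) (x : Q) : Subgroup (Equiv.Perm Q) where
  carrier := {g | g ∈ S.Dis ∧ α.r (g x) x}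
  one_mem' := ⟨S.Dis.one_mem, α.refl x⟩
  mul_mem' := by
    intro a b ha hb
    refine ⟨S.Dis.mul_mem ha.1 hb.1, ?_⟩
    exact α.trans (S.lmlt_maps hα (S.disRel_le_lmlt _ ha.1) _ _ hb.2) ha.2
  inv_mem' := by
    intro a ha
    refine ⟨S.Dis.inv_mem ha.1, ?_⟩
    have h2 := S.lmlt_maps hα (inv_mem (S.disRel_le_lmlt _ ha.1)) _ _ ha.2
    rw [show a⁻¹ (a x) = x from a.symm_apply_apply x] at h2
    exact α.symm h2

/-- The admissible subgroups `Norm(Q)`. -/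
def Norm : Set (Subgroup (Equiv.Perm Q)) :=
  {N | N ≤ S.LMlt ∧ (∀ h ∈ S.LMlt, ∀ n ∈ N, h * n * h⁻¹ ∈ N) ∧ S.disRel (orbRel N) ≤ N}

/-- Image of a subgroup along the canonical projection `π_α`. -/
def piSub (α : Setoid Q) (N : Subgroup (Equiv.Perm Q)) : Subgroup (Equiv.Perm (Quotient α)) where
  carrier := {k | ∃ h ∈ N, ∀ x : Q, k (Quotient.mk α x) = Quotient.mk α (h x)}
  one_mem' := ⟨1, N.one_mem, fun _ => rfl⟩
  mul_mem' := by
    rintro a b ⟨ha, haN, hae⟩ ⟨hb, hbN, hbe⟩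
    refine ⟨ha * hb, N.mul_mem haN hbN, fun x => ?_⟩
    show a (b (Quotient.mk α x)) = _
    rw [hbe, hae]; rfl
  inv_mem' := by
    rintro a ⟨h, hN, he⟩
    refine ⟨h⁻¹, N.inv_mem hN, fun x => ?_⟩
    have h1 := he (h⁻¹ x)
    rw [show h (h⁻¹ x) = x from h.apply_symm_apply x] at h1
    rw [← h1]; exact a.symm_apply_apply _

/-- Preimage of a subgroup along the canonical projection `π_α`. -/
def piPre (α : Setoid Q) (K : Subgroup (Equiv.Perm (Quotient α))) : Subgroup (Equiv.Perm Q) where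
  carrier := {h | h ∈ S.LMlt ∧ ∃ k ∈ K, ∀ x : Q, k (Quotient.mk α x) = Quotient.mk α (h x)}
  one_mem' := ⟨S.LMlt.one_mem, 1, K.one_mem, fun _ => rfl⟩
  mul_mem' := by
    rintro a b ⟨haL, ka, kaK, hae⟩ ⟨hbL, kb, kbK, hbe⟩
    refine ⟨S.LMlt.mul_mem haL hbL, ka * kb, K.mul_mem kaK kbK, fun x => ?_⟩
    show ka (kb (Quotient.mk α x)) = _
    rw [hbe, hae]; rfl
  inv_mem' := by
    rintro a ⟨haL, k, kK, he⟩
    refine ⟨S.LMlt.inv_mem haL, k⁻¹, K.inv_mem kK, fun x => ?_⟩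
    have h1 := he (a⁻¹ x)
    rw [show a (a⁻¹ x) = x from a.apply_symm_apply x] at h1
    rw [← h1]; exact k.symm_apply_apply _

/-- Quotient left quasigroup. -/
def quotLQ (α : Setoid Q) (hα : S.IsCongruence α) : LeftQuasigroup (Quotient α) where
  op := Quotient.lift₂ (fun x y => Quotient.mk α (S.op x y))
    (fun _ _ _ _ h1 h2 => Quotient.sound (hα.op_compat h1 h2))
  ld := Quotient.lift₂ (fun x y => Quotient.mk α (S.ld x y))
    (fun _ _ _ _ h1 h2 => Quotient.sound (hα.ld_compat h1 h2))
  op_ld := fun a b => Quotient.inductionOn₂ a b fun x y => congrArg (Quotient.mk α) (S.op_ld x y)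
  ld_op := fun a b => Quotient.inductionOn₂ a b fun x y => congrArg (Quotient.mk α) (S.ld_op x y)

/-- Idempotent left quasigroup. -/
def Idem : Prop := ∀ x : Q, S.op x x = x

/-- Left distributive law (defining quandles among idempotent left quasigroups). -/
def Ldist : Prop := ∀ x y z : Q, S.op x (S.op y z) = S.op (S.op x y) (S.op x z)

/-- A left quasigroup is faithful if the Cayley kernel is trivial. -/
def Faithful : Prop := ∀ x y : Q, (∀ z, S.op x z = S.op y z) → x = y

/-- Connected: `LMlt` acts transitively. -/
def Connected : Prop := ∀ x y : Q, ∃ h ∈ S.LMlt, h y = x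

/-- Semiregular: `Dis` acts with trivial stabilizers. -/
def Semiregular : Prop := ∀ g ∈ S.Dis, ∀ x : Q, g x = x → g = 1

/-- Subalgebras. -/
def IsSubalgebra (A : Set Q) : Prop :=
  ∀ ⦃x⦄, x ∈ A → ∀ ⦃y⦄, y ∈ A → S.op x y ∈ A ∧ S.ld x y ∈ A

/-- The left quasigroup structure on a subalgebra. -/
def subLQ (A : Set Q) (hA : S.IsSubalgebra A) : LeftQuasigroup A where
  op a b := ⟨S.op a b, (hA a.2 b.2).1⟩
  ld a b := ⟨S.ld a b, (hA a.2 b.2).2⟩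
  op_ld a b := Subtype.ext (S.op_ld a b)
  ld_op a b := Subtype.ext (S.ld_op a b)

/-- Superconnected: every subalgebra is connected. -/
def Superconnected : Prop := ∀ (A : Set Q) (hA : S.IsSubalgebra A), (S.subLQ A hA).Connected

/-- Superfaithful: every subalgebra is faithful. -/
def Superfaithful : Prop := ∀ (A : Set Q) (hA : S.IsSubalgebra A), (S.subLQ A hA).Faithful

theorem infCong {I : Type*} {α : I → Setoid Q} (hc : ∀ i, S.IsCongruence (α i)) :
    S.IsCongruence (infSetoid α) :=
  ⟨fun h1 h2 i => (hc i).op_compat (h1 i) (h2 i),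
   fun h1 h2 i => (hc i).ld_compat (h1 i) (h2 i)⟩

end LeftQuasigroup

/-- Terms in the language of left quasigroups in `n` variables. -/
inductive LQTerm : ℕ → Type
  | var : ∀ {n}, Fin n → LQTerm n
  | op : ∀ {n}, LQTerm n → LQTerm n → LQTerm n
  | ld : ∀ {n}, LQTerm n → LQTerm n → LQTerm n

/-- Evaluation of terms. -/
def evalT {Q : Type*} (S : LeftQuasigroup Q) : ∀ {n}, LQTerm n → (Fin n → Q) → Q
  | _, .var i, v => v i
  | _, .op t s, v => S.op (evalT S t v) (evalT S s v)
  | _, .ld t s, v => S.ld (evalT S t v) (evalT S s v)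

/-- The centralizing relation `C(a, b; d)` of commutator theory. -/
def CC {Q : Type*} (S : LeftQuasigroup Q) (a b d : Q → Q → Prop) : Prop :=
  ∀ (n : ℕ) (t : LQTerm (n + 1)) (x y : Q) (z u : Fin n → Q),
    a x y → (∀ i, b (z i) (u i)) →
    d (evalT S t (Fin.cons x z)) (evalT S t (Fin.cons x u)) →
    d (evalT S t (Fin.cons y z)) (evalT S t (Fin.cons y u))

/-- Nilpotency of length `n` in the sense of commutator theory: the ascending central
series (characterized congruence by congruence) reaches the full congruence at step `n`. -/
def LeftQuasigroup.NilpotentLength {Q : Type*} (S : LeftQuasigroup Q) (n : ℕ) : Prop :=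
  ∃ c : ℕ → Setoid Q,
    (∀ k, S.IsCongruence (c k)) ∧
    (∀ x y : Q, (c 0).r x y ↔ x = y) ∧
    (∀ k, ∀ β : Setoid Q, S.IsCongruence β →
      (CC S β.r (fun _ _ => True) (c k).r ↔ β ≤ c (k + 1))) ∧
    (∀ x y : Q, (c n).r x y)


/-! Stabilizers in a subgroup normalized by `h` transform by conjugation, `N_{h x} = h N_x h⁻¹`,
so equality of stabilizers is preserved by `LMlt(Q)`. If `Q` is idempotent, `L_y` fixes `y`, so
`L_y` and `L_y⁻¹` map every block through `y` onto itself, and they send `z` to `y * z` and `y \ z`. -/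

open Equiv

theorem Subgroup.le_normalizer_of_conj_mem {G : Type*} [Group G] {N K : Subgroup G}
    (hK : ∀ h ∈ K, ∀ n ∈ N, h * n * h⁻¹ ∈ N) : K ≤ Subgroup.normalizer N := by
  intro h hh
  refine Subgroup.mem_normalizer_iff.2 fun n => ⟨hK h hh n, fun hn => ?_⟩
  simpa [mul_assoc] using hK h⁻¹ (inv_mem hh) _ hn

section Stabilizer

variable {Q : Type*} {N : Subgroup (Perm Q)} {h : Perm Q}

theorem pstab_apply_eq_map_conj (hh : h ∈ Subgroup.normalizer N) (x : Q) :
    pstab N (h x) = (pstab N x).map (MulAut.conj h).toMonoidHom := by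
  have hN : N.map (MulAut.conj h).toMonoidHom = N := Subgroup.mem_normalizer_iff_map_conj_eq.1 hh
  rw [pstab, pstab, Subgroup.map_inf _ _ _ (MulAut.conj h).injective, hN,
    ← MulAction.stabilizer_smul_eq_stabilizer_map_conj, Perm.smul_def]

theorem pstab_apply_eq_of_pstab_eq (hh : h ∈ Subgroup.normalizer N) {x y : Q}
    (hxy : pstab N x = pstab N y) : pstab N (h x) = pstab N (h y) := by
  rw [pstab_apply_eq_map_conj hh, pstab_apply_eq_map_conj hh, hxy]

end Stabilizer

namespace LeftQuasigroup

variable {Q : Type*} (S : LeftQuasigroup Q)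

theorem L_inv_apply_self_of_idem (hid : S.Idem) (y : Q) : (S.L y)⁻¹ y = y :=
  Perm.inv_eq_iff_eq.2 (hid y).symm

theorem isSubalgebra_fiber_of_idem {β : Type*} (hid : S.Idem) {f : Q → β}
    (hf : ∀ h ∈ S.LMlt, ∀ x y, f x = f y → f (h x) = f (h y)) (b : β) :
    S.IsSubalgebra {y | f y = b} := by
  intro y (hy : f y = b) z (hz : f z = b)
  have hzy : f z = f y := hz.trans hy.symm
  constructor
  · change f (S.L y z) = b
    rw [hf _ (S.L_mem_lmlt y) z y hzy, show S.L y y = y from hid y, hy]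
  · change f ((S.L y)⁻¹ z) = b
    rw [hf _ (inv_mem (S.L_mem_lmlt y)) z y hzy, S.L_inv_apply_self_of_idem hid, hy]

end LeftQuasigroup

theorem stmt10_general {Q : Type*} (S : LeftQuasigroup Q) (N : Subgroup (Equiv.Perm Q))
    (hnorm : ∀ h ∈ S.LMlt, ∀ n ∈ N, h * n * h⁻¹ ∈ N) :
    (∀ h ∈ S.LMlt, ∀ x y : Q, pstab N x = pstab N y → pstab N (h x) = pstab N (h y)) ∧
    (S.Idem → ∀ x : Q, S.IsSubalgebra {y | pstab N y = pstab N x}) := by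
  have hblock : ∀ h ∈ S.LMlt, ∀ x y : Q, pstab N x = pstab N y → pstab N (h x) = pstab N (h y) :=
    fun _ hh _ _ => pstab_apply_eq_of_pstab_eq (Subgroup.le_normalizer_of_conj_mem hnorm hh)
  exact ⟨hblock, fun hid x => S.isSubalgebra_fiber_of_idem hid hblock (pstab N x)⟩

/-- the classes of `σ_N` are blocks of the action of `LMlt(Q)`, and in the
idempotent case they are subalgebras. -/
theorem stmt10 {Q : Type*} (S : LeftQuasigroup Q) (N : Subgroup (Equiv.Perm Q))
    (hle : N ≤ S.LMlt) (hnorm : ∀ h ∈ S.LMlt, ∀ n ∈ N, h * n * h⁻¹ ∈ N) :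
    (∀ h ∈ S.LMlt, ∀ x y : Q, pstab N x = pstab N y → pstab N (h x) = pstab N (h y)) ∧
    (S.Idem → ∀ x : Q, S.IsSubalgebra {y | pstab N y = pstab N x}) :=
  stmt10_general S N hnorm
end

section
/- Let Q be a finite nilpotent idempotent superconnected left quasigroup and p a prime. Then p divides |Q| if and only if p divides |Dis(Q)|. In particular, if |Q| = p^n then Dis(Q) is a p-group. -/
/-!
`|Q|` divides `|Dis(Q)|` by orbit–stabilizer: for idempotent connected `Q`, `LMlt(Q)` is
`Dis(Q)` times the powers of `L_a`, and these fix `a`, so `Dis(Q)` is already transitive.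

Conversely, take `g ∈ Dis(Q)` of prime order `p` with `p ∤ |Q|`, and let
`0_Q = ζ₀ ≤ ζ₁ ≤ ⋯ ≤ ζₙ = 1_Q` be the ascending central series. If `g` preserves every
`ζₖ₊₁`-block, it has a fixed point on each of them, as `gᵖ = 1` and the block size divides
`|Q|`. Writing `g` as a word in the left translations with exponent sum zero turns the centrality
of `ζₖ₊₁` over `ζₖ` into: an element of `Dis(Q)` that fixes one point of a `ζₖ₊₁`-block modulo
`ζₖ` fixes every point of that block modulo `ζₖ`. Hence `g` preserves every `ζₖ`-block;
descending to `ζ₀` gives `g = 1`.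
-/

namespace LeftQuasigroup

variable {Q : Type*} (S : LeftQuasigroup Q)

@[simp]
theorem L_apply (x y : Q) : S.L x y = S.op x y := rfl

@[simp]
theorem L_symm_apply (x y : Q) : (S.L x).symm y = S.ld x y := rfl

theorem rel_apply_iff {α : Setoid Q} (hα : S.IsCongruence α) {h : Equiv.Perm Q}
    (hh : h ∈ S.LMlt) (x y : Q) : α.r (h x) (h y) ↔ α.r x y :=
  ⟨fun hxy => by simpa using S.lmlt_maps hα (inv_mem hh) _ _ hxy, S.lmlt_maps hα hh x y⟩

theorem exists_mem_LMlt_semiconj {Q' : Type*} (S' : LeftQuasigroup Q') (f : Q → Q')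
    (hf : ∀ x y, f (S.op x y) = S'.op (f x) (f y)) {g : Equiv.Perm Q} (hg : g ∈ S.LMlt) :
    ∃ k ∈ S'.LMlt, Function.Semiconj f g k := by
  induction hg using Subgroup.closure_induction with
  | mem g hgen =>
    obtain ⟨x, rfl⟩ := hgen
    exact ⟨S'.L (f x), S'.L_mem_lmlt _, hf x⟩
  | one => exact ⟨1, one_mem _, Function.Semiconj.id_right⟩
  | mul a b _ _ ha hb =>
    obtain ⟨ka, hka, hfa⟩ := ha
    obtain ⟨kb, hkb, hfb⟩ := hb
    exact ⟨ka * kb, mul_mem hka hkb, hfa.comp_right hfb⟩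
  | inv a _ ha =>
    obtain ⟨ka, hka, hfa⟩ := ha
    exact ⟨ka⁻¹, inv_mem hka, hfa.inverses_right a.rightInverse_symm ka.leftInverse_symm⟩

theorem connected_of_superconnected (hsc : S.Superconnected) : S.Connected := by
  intro x y
  have huniv : S.IsSubalgebra Set.univ := fun _ _ _ _ => ⟨trivial, trivial⟩
  obtain ⟨h, hh, hyx⟩ := hsc Set.univ huniv ⟨x, trivial⟩ ⟨y, trivial⟩
  obtain ⟨k, hk, hfk⟩ := exists_mem_LMlt_semiconj _ S Subtype.val (fun _ _ => rfl) hh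
  exact ⟨k, hk, by simpa [hyx] using (hfk ⟨y, trivial⟩).symm⟩

theorem card_class_eq (hconn : S.Connected) {β : Setoid Q} (hβ : S.IsCongruence β)
    (a b : Q) : Nat.card {y // β.r y a} = Nat.card {y // β.r y b} := by
  obtain ⟨h, hh, rfl⟩ := hconn b a
  exact Nat.card_congr (h.subtypeEquiv fun y => (S.rel_apply_iff hβ hh y a).symm)

theorem card_class_dvd_card [Finite Q] (hconn : S.Connected) {β : Setoid Q}
    (hβ : S.IsCongruence β) (a : Q) : Nat.card {y // β.r y a} ∣ Nat.card Q := by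
  have := Fintype.ofFinite (Quotient β)
  refine ⟨Nat.card (Quotient β), ?_⟩
  have hfiber (q : Quotient β) : Nat.card {y // Quotient.mk β y = q} = Nat.card {y // β.r y a} :=
    q.inductionOn fun b => (Nat.card_congr (Equiv.subtypeEquivRight fun _ => Quotient.eq)).trans
      (S.card_class_eq hconn hβ b a)
  calc Nat.card Q = Nat.card (Σ q : Quotient β, {y // Quotient.mk β y = q}) :=
        (Nat.card_congr (Equiv.sigmaFiberEquiv _)).symm
    _ = ∑ q : Quotient β, Nat.card {y // Quotient.mk β y = q} := Nat.card_sigma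
    _ = Nat.card {y // β.r y a} * Nat.card (Quotient β) := by
        simp [hfiber, Nat.card_eq_fintype_card, mul_comm]

theorem conj_mem_Dis {h g : Equiv.Perm Q} (hh : h ∈ S.LMlt) (hg : g ∈ S.Dis) :
    h * g * h⁻¹ ∈ S.Dis := by
  induction hg using Subgroup.closure_induction with
  | mem g hgen =>
    obtain ⟨h', hh', x, y, -, rfl⟩ := hgen
    exact Subgroup.subset_closure ⟨h * h', mul_mem hh hh', x, y, trivial, by group⟩
  | one => simp
  | mul a b _ _ ha hb => simpa [mul_assoc] using mul_mem ha hb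
  | inv a _ ha => simpa [mul_assoc] using inv_mem ha

theorem exists_mem_Dis_mul_zpow (a : Q) {h : Equiv.Perm Q} (hh : h ∈ S.LMlt) :
    ∃ g ∈ S.Dis, ∃ m : ℤ, h = g * S.L a ^ m := by
  induction hh using Subgroup.closure_induction with
  | mem h hgen =>
    obtain ⟨x, rfl⟩ := hgen
    exact ⟨S.L x * (S.L a)⁻¹, Subgroup.subset_closure ⟨1, one_mem _, x, a, trivial, by group⟩,
      1, by group⟩
  | one => exact ⟨1, one_mem _, 0, by group⟩
  | mul h₁ h₂ _ _ ih₁ ih₂ =>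
    obtain ⟨g₁, hg₁, m₁, rfl⟩ := ih₁
    obtain ⟨g₂, hg₂, m₂, rfl⟩ := ih₂
    refine ⟨g₁ * (S.L a ^ m₁ * g₂ * (S.L a ^ m₁)⁻¹),
      mul_mem hg₁ (S.conj_mem_Dis (zpow_mem (S.L_mem_lmlt a) m₁) hg₂), m₁ + m₂, ?_⟩
    rw [zpow_add]
    group
  | inv h₁ _ ih₁ =>
    obtain ⟨g₁, hg₁, m₁, rfl⟩ := ih₁
    refine ⟨(S.L a ^ m₁)⁻¹ * g₁⁻¹ * S.L a ^ m₁, ?_, -m₁, by rw [zpow_neg]; group⟩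
    simpa using S.conj_mem_Dis (inv_mem (zpow_mem (S.L_mem_lmlt a) m₁)) (inv_mem hg₁)

theorem exists_mem_Dis_apply_eq (hi : S.Idem) (hconn : S.Connected) (x y : Q) :
    ∃ g ∈ S.Dis, g y = x := by
  obtain ⟨h, hh, rfl⟩ := hconn x y
  obtain ⟨g, hg, m, rfl⟩ := S.exists_mem_Dis_mul_zpow y hh
  have hfix : S.L y y = y := hi y
  exact ⟨g, hg, by simp [Equiv.Perm.zpow_apply_eq_self_of_apply_eq_self hfix]⟩

theorem card_dvd_card_Dis [Nonempty Q] (hi : S.Idem) (hconn : S.Connected) :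
    Nat.card Q ∣ Nat.card S.Dis := by
  have : MulAction.IsPretransitive S.Dis Q := ⟨fun y x => by
    obtain ⟨g, hg, hgy⟩ := S.exists_mem_Dis_apply_eq hi hconn x y
    exact ⟨⟨g, hg⟩, hgy⟩⟩
  rw [← MulAction.index_stabilizer_of_transitive S.Dis (Classical.arbitrary Q)]
  exact Subgroup.index_dvd_card _

theorem exists_freeGroup_of_mem_Dis {g : Equiv.Perm Q} (hg : g ∈ S.Dis) :
    ∃ w : FreeGroup Q, FreeGroup.lift S.L w = g ∧ ∀ a, FreeGroup.lift (fun _ => S.L a) w = 1 := by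
  suffices S.Dis ≤ (⨅ a, (FreeGroup.lift fun _ : Q => S.L a).ker).map (FreeGroup.lift S.L) by
    obtain ⟨w, hw, rfl⟩ := this hg
    exact ⟨w, rfl, Subgroup.mem_iInf.1 hw⟩
  refine (Subgroup.closure_le _).2 ?_
  rintro _ ⟨h, hh, x, y, -, rfl⟩
  rw [LMlt, ← FreeGroup.range_lift_eq_closure] at hh
  obtain ⟨u, rfl⟩ := hh
  refine ⟨u * FreeGroup.of x * (FreeGroup.of y)⁻¹ * u⁻¹, Subgroup.mem_iInf.2 fun a => ?_, ?_⟩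
  · simp [MonoidHom.mem_ker]
  · simp [mul_assoc]

end LeftQuasigroup

/-- Variable `0` is the argument; variable `(e x).succ` is a parameter standing for `x`. -/
def wordTerm {Q : Type*} {n : ℕ} (e : Q ≃ Fin n) : List (Q × Bool) → LQTerm (n + 1)
  | [] => .var 0
  | (x, true) :: l => .op (.var (e x).succ) (wordTerm e l)
  | (x, false) :: l => .ld (.var (e x).succ) (wordTerm e l)

theorem evalT_wordTerm {Q : Type*} (S : LeftQuasigroup Q) {n : ℕ} (e : Q ≃ Fin n)
    (l : List (Q × Bool)) (y : Q) (v : Fin n → Q) :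
    evalT S (wordTerm e l) (Fin.cons y v) =
      FreeGroup.lift (fun x => S.L (v (e x))) (FreeGroup.mk l) y := by
  rw [FreeGroup.lift_mk]
  induction l with
  | nil => simp [wordTerm, evalT]
  | cons p l ih => obtain ⟨x, _ | _⟩ := p <;> simp [wordTerm, evalT, ih]

theorem CC.rel_apply_of_mem_Dis {Q : Type*} [Finite Q] {S : LeftQuasigroup Q}
    {a d : Q → Q → Prop} (hC : CC S a (fun _ _ => True) d) {g : Equiv.Perm Q} (hg : g ∈ S.Dis)
    {x y : Q} (hxy : a x y) (hx : d (g x) x) : d (g y) y := by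
  classical
  obtain ⟨n, ⟨e⟩⟩ := Finite.exists_equiv_fin Q
  obtain ⟨w, rfl, hw⟩ := S.exists_freeGroup_of_mem_Dis hg
  -- at constant parameters the word evaluates to `L_x ^ 0`, since its exponent sum is zero
  have key := hC n (wordTerm e w.toWord) x y e.symm (fun _ => x) hxy fun _ => trivial
  simp only [evalT_wordTerm, FreeGroup.mk_toWord, Equiv.symm_apply_apply, hw] at key
  exact key hx

namespace LeftQuasigroup

variable {Q : Type*} (S : LeftQuasigroup Q)

theorem mem_kerRel_of_central [Finite Q] (hconn : S.Connected) {α β : Setoid Q}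
    (hβ : S.IsCongruence β) (hC : CC S β.r (fun _ _ => True) α.r) {p : ℕ} [Fact p.Prime]
    (hpQ : ¬p ∣ Nat.card Q) {g : Equiv.Perm Q} (hg : g ∈ S.Dis) (hgp : g ^ p = 1)
    (hgβ : g ∈ kerRel β) : g ∈ kerRel α := by
  intro a
  have := Fintype.ofFinite {y // β.r y a}
  let σ := g.subtypePerm (p := fun y => β.r y a) fun y =>
    ⟨fun hy => β.trans (β.symm (hgβ y)) hy, β.trans (hgβ y)⟩
  have hσ : σ ^ p ^ 1 = 1 := by
    rw [pow_one, Equiv.Perm.subtypePerm_pow]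
    ext y
    simp [hgp]
  have hpB : ¬p ∣ Fintype.card {y // β.r y a} := fun hp =>
    hpQ ((Nat.card_eq_fintype_card (α := {y // β.r y a}) ▸ hp).trans
      (S.card_class_dvd_card hconn hβ a))
  obtain ⟨⟨y, hy⟩, hfix⟩ := Equiv.Perm.exists_fixed_point_of_prime hpB hσ
  have hgy : g y = y := congrArg Subtype.val hfix
  exact hC.rel_apply_of_mem_Dis hg hy (hgy.symm ▸ α.refl y)

theorem prime_dvd_card_of_dvd_card_Dis [Finite Q] (hconn : S.Connected) {n : ℕ}
    (hnil : S.NilpotentLength n) {p : ℕ} (hp : p.Prime) (hpD : p ∣ Nat.card S.Dis) :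
    p ∣ Nat.card Q := by
  have := Fact.mk hp
  obtain ⟨c, hcong, hbot, hcenter, htop⟩ := hnil
  by_contra hpQ
  obtain ⟨⟨g, hg⟩, hord⟩ := exists_prime_orderOf_dvd_card' p hpD
  have hgp : g ^ p = 1 := congrArg Subtype.val (hord ▸ pow_orderOf_eq_one (⟨g, hg⟩ : S.Dis))
  have hker (k : ℕ) (hk : k ≤ n) : g ∈ kerRel (c k) :=
    Nat.decreasingInduction (motive := fun k _ => g ∈ kerRel (c k))
      (fun k _ ih => S.mem_kerRel_of_central hconn (hcong (k + 1))
        ((hcenter k _ (hcong (k + 1))).2 le_rfl) hpQ hg hgp ih)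
      (fun _ => htop _ _) hk
  have hg1 : (⟨g, hg⟩ : S.Dis) = 1 :=
    Subtype.ext (Equiv.ext fun x => (hbot _ _).1 (hker 0 n.zero_le x))
  exact hp.one_lt.ne' (by rw [← hord, hg1, orderOf_one])

end LeftQuasigroup

/-- for a finite nilpotent idempotent superconnected left quasigroup,
`p ∣ |Q| ↔ p ∣ |Dis(Q)|`; in particular if `|Q| = p^n` then `Dis(Q)` is a `p`-group. -/
theorem stmt19 {Q : Type*} [Finite Q] [Nonempty Q] (S : LeftQuasigroup Q)
    (hi : S.Idem) (hsc : S.Superconnected) (hnil : ∃ n, S.NilpotentLength n)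
    (p : ℕ) (hp : p.Prime) :
    (p ∣ Nat.card Q ↔ p ∣ Nat.card ↥S.Dis) ∧
    (∀ n : ℕ, Nat.card Q = p ^ n → IsPGroup p ↥S.Dis) := by
  have hconn := S.connected_of_superconnected hsc
  obtain ⟨m, hm⟩ := hnil
  have hrev (q : ℕ) (hq : q.Prime) : q ∣ Nat.card S.Dis → q ∣ Nat.card Q :=
    S.prime_dvd_card_of_dvd_card_Dis hconn hm hq
  refine ⟨⟨fun h => h.trans (S.card_dvd_card_Dis hi hconn), hrev p hp⟩, fun n hn => ?_⟩
  have := Fact.mk hp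
  refine IsPGroup.iff_card.2 ⟨_, Nat.eq_prime_pow_of_unique_prime_dvd Nat.card_pos.ne' ?_⟩
  intro q hq hqD
  exact (Nat.prime_dvd_prime_iff_eq hq hp).1 (hq.dvd_of_dvd_pow (hn ▸ hrev q hq hqD))
end
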